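/- arXiv:2402.03439 — 3 statements merged into one kernel-verified Lean document; each statement's English description precedes it below -/
import Mathlib

section
/- Let |φ⟩ be a pure state on A⊗B⊗C⊗E with I(A:E) = I(B:E) = I(C:E) = 0. Then the eigenvectors |φ_i⟩ (with distinct eigenvalues and chosen as a spectral decomposition) of the reduced state σ_{ABC} = Tr_E|φ⟩⟨φ| satisfy: for i ≠ j, Tr_B[|φ_i⟩⟨φ_i|] and Tr_B[|φ_j⟩⟨φ_j|] are supported on orthogonal subspaces of A⊗C. -/
open scoped Kronecker ComplexOrder
open Matrix

noncomputable def vN {n : Type*} [Fintype n] [DecidableEq n] (ρ : Matrix n n ℂ) : ℝ :=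
  if h : ρ.IsHermitian then ∑ i, Real.negMulLog (h.eigenvalues i) else 0

def IsDensity {n : Type*} [Fintype n] [DecidableEq n] (ρ : Matrix n n ℂ) : Prop :=
  ρ.PosSemidef ∧ ρ.trace = 1

noncomputable def pureDM {n : Type*} (ψ : n → ℂ) : Matrix n n ℂ :=
  Matrix.vecMulVec ψ (star ψ)

section tri

variable {a b c : Type*} [Fintype a] [Fintype b] [Fintype c]

noncomputable def rA (ρ : Matrix (a × b × c) (a × b × c) ℂ) : Matrix a a ℂ :=
  Matrix.of fun i j => ∑ y : b, ∑ z : c, ρ (i, y, z) (j, y, z)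

noncomputable def rB (ρ : Matrix (a × b × c) (a × b × c) ℂ) : Matrix b b ℂ :=
  Matrix.of fun i j => ∑ x : a, ∑ z : c, ρ (x, i, z) (x, j, z)

noncomputable def rC (ρ : Matrix (a × b × c) (a × b × c) ℂ) : Matrix c c ℂ :=
  Matrix.of fun i j => ∑ x : a, ∑ y : b, ρ (x, y, i) (x, y, j)

noncomputable def rAB (ρ : Matrix (a × b × c) (a × b × c) ℂ) : Matrix (a × b) (a × b) ℂ :=
  Matrix.of fun i j => ∑ z : c, ρ (i.1, i.2, z) (j.1, j.2, z)

noncomputable def rBC (ρ : Matrix (a × b × c) (a × b × c) ℂ) : Matrix (b × c) (b × c) ℂ :=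
  Matrix.of fun i j => ∑ x : a, ρ (x, i.1, i.2) (x, j.1, j.2)

noncomputable def rAC (ρ : Matrix (a × b × c) (a × b × c) ℂ) : Matrix (a × c) (a × c) ℂ :=
  Matrix.of fun i j => ∑ y : b, ρ (i.1, y, i.2) (j.1, y, j.2)

noncomputable def qCMI [DecidableEq a] [DecidableEq b] [DecidableEq c]
    (ρ : Matrix (a × b × c) (a × b × c) ℂ) : ℝ :=
  vN (rAB ρ) + vN (rBC ρ) - vN (rB ρ) - vN ρ

noncomputable def bOp [DecidableEq a] [DecidableEq c] (K : Matrix b b ℂ) :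
    Matrix (a × b × c) (a × b × c) ℂ :=
  (1 : Matrix a a ℂ) ⊗ₖ (K ⊗ₖ (1 : Matrix c c ℂ))

noncomputable def applyB [DecidableEq a] [DecidableEq c] {ι : Type*} [Fintype ι]
    (K : ι → Matrix b b ℂ) (ρ : Matrix (a × b × c) (a × b × c) ℂ) :
    Matrix (a × b × c) (a × b × c) ℂ :=
  ∑ i, bOp (a := a) (c := c) (K i) * ρ * (bOp (K i))ᴴ

end tri

section fourparty

variable {a b c e : Type*} [Fintype a] [Fintype b] [Fintype c] [Fintype e]

/-- Reduced state on `A ⊗ B ⊗ C` of a state on `A ⊗ B ⊗ C ⊗ E`. -/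
noncomputable def redABC (ρ : Matrix (a × b × c × e) (a × b × c × e) ℂ) :
    Matrix (a × b × c) (a × b × c) ℂ :=
  Matrix.of fun s t => ∑ w : e, ρ (s.1, s.2.1, s.2.2, w) (t.1, t.2.1, t.2.2, w)

/-- Reduced state on `E`. -/
noncomputable def redE (ρ : Matrix (a × b × c × e) (a × b × c × e) ℂ) : Matrix e e ℂ :=
  Matrix.of fun w w' => ∑ x : a, ∑ y : b, ∑ z : c, ρ (x, y, z, w) (x, y, z, w')

/-- Reduced state on `A ⊗ E`. -/
noncomputable def redAE (ρ : Matrix (a × b × c × e) (a × b × c × e) ℂ) :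
    Matrix (a × e) (a × e) ℂ :=
  Matrix.of fun s t => ∑ y : b, ∑ z : c, ρ (s.1, y, z, s.2) (t.1, y, z, t.2)

/-- Reduced state on `B ⊗ E`. -/
noncomputable def redBE (ρ : Matrix (a × b × c × e) (a × b × c × e) ℂ) :
    Matrix (b × e) (b × e) ℂ :=
  Matrix.of fun s t => ∑ x : a, ∑ z : c, ρ (x, s.1, z, s.2) (x, t.1, z, t.2)

/-- Reduced state on `C ⊗ E`. -/
noncomputable def redCE (ρ : Matrix (a × b × c × e) (a × b × c × e) ℂ) :
    Matrix (c × e) (c × e) ℂ :=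
  Matrix.of fun s t => ∑ x : a, ∑ y : b, ρ (x, y, s.1, s.2) (x, y, t.1, t.2)

end fourparty

/-!
By the equality case of Klein's inequality, `I(B:E) = 0` forces `ρ_BE = ρ_B ⊗ ρ_E`. Let
`Φ : E → ABC` be the operator whose matrix is `φ`, so that `σ_ABC = Φ Φ†`. An eigenvector of `σ_ABC`
with nonzero eigenvalue lies in the range of `Φ`, and for `u = Φ η`, `v = Φ ζ` the factorisation
of `ρ_BE` gives `Tr_AC |v⟩⟨u| = ⟨u|v⟩ ρ_B`, which vanishes because eigenvectors for distinct
eigenvalues are orthogonal. Reshaping `u` into `K_u : B → AC` gives `Tr_B |u⟩⟨u| = K_u K_u†` and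
`Tr_AC |v⟩⟨u| = (K_u† K_v)ᵀ`, so `Tr_B |u⟩⟨u| · Tr_B |v⟩⟨v| = K_u (K_u† K_v) K_v† = 0`.
-/

open Real InformationTheory

lemma mul_log_sub_log_sub_sub_eq_mul_klFun {p q : ℝ} (hq : q ≠ 0) :
    p * (log p - log q) - (p - q) = q * klFun (p / q) := by
  rcases eq_or_ne p 0 with rfl | hp
  · simp [klFun]
  rw [klFun, log_div hp hq]
  field_simp
  ring

lemma sub_le_mul_log_sub_log {p q : ℝ} (hp : 0 ≤ p) (hq : 0 ≤ q) (hpq : q = 0 → p = 0) :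
    p - q ≤ p * (log p - log q) := by
  rcases hq.eq_or_lt with rfl | hq
  · simp [hpq rfl]
  have := mul_log_sub_log_sub_sub_eq_mul_klFun (p := p) hq.ne'
  nlinarith [mul_nonneg hq.le (klFun_nonneg (div_nonneg hp hq.le))]

lemma eq_of_sub_eq_mul_log_sub_log {p q : ℝ} (hp : 0 ≤ p) (hq : 0 ≤ q) (hpq : q = 0 → p = 0)
    (h : p - q = p * (log p - log q)) : p = q := by
  rcases hq.eq_or_lt with rfl | hq
  · exact hpq rfl
  have hkl : q * klFun (p / q) = 0 := by
    rw [← mul_log_sub_log_sub_sub_eq_mul_klFun hq.ne', h, sub_self]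
  have := (klFun_eq_zero_iff (div_nonneg hp hq.le)).1 ((mul_eq_zero.1 hkl).resolve_left hq.ne')
  rwa [div_eq_one_iff_eq hq.ne'] at this

lemma eq_of_sum_mul_log_eq_of_mem_doublyStochastic {n : Type*} [Fintype n] [DecidableEq n]
    {P : Matrix n n ℝ} (hP : P ∈ doublyStochastic ℝ n) {p q : n → ℝ}
    (hp : ∀ i, 0 ≤ p i) (hq : ∀ m, 0 ≤ q m) (hsum : ∑ i, p i = ∑ m, q m)
    (hsupp : ∀ i m, P i m ≠ 0 → q m = 0 → p i = 0)
    (hent : ∑ i, p i * log (p i) = ∑ m, (∑ i, p i * P i m) * log (q m))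
    {i m : n} (him : P i m ≠ 0) : p i = q m := by
  set gap : n → n → ℝ := fun i m => P i m * (p i * (log (p i) - log (q m)) - (p i - q m))
  have gap_nonneg : ∀ i m, 0 ≤ gap i m := by
    intro i m
    by_cases h : P i m = 0
    · simp [gap, h]
    exact mul_nonneg (hP.1 i m) (sub_nonneg.2 (sub_le_mul_log_sub_log (hp i) (hq m) (hsupp i m h)))
  have gap_sum : ∑ i, ∑ m, gap i m = 0 := by
    have expand : ∀ i m, gap i m = P i m * (p i * log (p i)) - p i * P i m * log (q m)
        - P i m * p i + P i m * q m := fun i m => by ring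
    have row : ∀ f : n → ℝ, ∑ i, ∑ m, P i m * f i = ∑ i, f i := fun f => by
      simp [← Finset.sum_mul, sum_row_of_mem_doublyStochastic hP]
    have col : ∑ i, ∑ m, P i m * q m = ∑ m, q m := by
      rw [Finset.sum_comm]; simp [← Finset.sum_mul, sum_col_of_mem_doublyStochastic hP]
    have cross : ∑ i, ∑ m, p i * P i m * log (q m) = ∑ m, (∑ i, p i * P i m) * log (q m) := by
      rw [Finset.sum_comm]; simp [Finset.sum_mul]
    simp only [expand, Finset.sum_add_distrib, Finset.sum_sub_distrib, row, col, cross]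
    linarith
  have gap_zero : gap i m = 0 := by
    rw [Finset.sum_eq_zero_iff_of_nonneg fun i _ => Finset.sum_nonneg fun m _ =>
      gap_nonneg i m] at gap_sum
    exact (Finset.sum_eq_zero_iff_of_nonneg fun m _ => gap_nonneg i m).1
      (gap_sum i (Finset.mem_univ _)) m (Finset.mem_univ _)
  refine eq_of_sub_eq_mul_log_sub_log (hp i) (hq m) (hsupp i m him) ?_
  linarith [(mul_eq_zero.1 gap_zero).resolve_left him]

namespace Matrix

lemma normSq_mem_doublyStochastic {n : Type*} [Fintype n] [DecidableEq n]
    {W : Matrix n n ℂ} (hW : W ∈ unitaryGroup n ℂ) :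
    (of fun i j => Complex.normSq (W i j)) ∈ doublyStochastic ℝ n := by
  have hrow : ∀ i, ∑ j, (Complex.normSq (W i j) : ℂ) = 1 := fun i => by
    simpa [mul_apply, Complex.mul_conj, one_apply] using
      congr_fun₂ (mem_unitaryGroup_iff.1 hW) i i
  have hcol : ∀ j, ∑ i, (Complex.normSq (W i j) : ℂ) = 1 := fun j => by
    simpa [mul_apply, Complex.normSq_eq_conj_mul_self, one_apply] using
      congr_fun₂ (mem_unitaryGroup_iff'.1 hW) j j
  exact mem_doublyStochastic_iff_sum.2
    ⟨fun i j => Complex.normSq_nonneg _, fun i => by exact_mod_cast hrow i,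
      fun j => by exact_mod_cast hcol j⟩

lemma kronecker_mem_unitaryGroup {m n : Type*} [Fintype m] [DecidableEq m] [Fintype n]
    [DecidableEq n] {X : Matrix m m ℂ} {Y : Matrix n n ℂ} (hX : X ∈ unitaryGroup m ℂ)
    (hY : Y ∈ unitaryGroup n ℂ) : X ⊗ₖ Y ∈ unitaryGroup (m × n) ℂ := by
  rw [mem_unitaryGroup_iff, star_eq_conjTranspose, conjTranspose_kronecker, ← mul_kronecker_mul,
    ← star_eq_conjTranspose, ← star_eq_conjTranspose, mem_unitaryGroup_iff.1 hX,
    mem_unitaryGroup_iff.1 hY, one_kronecker_one]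

lemma conjTranspose_mul_diagonal_mul_apply_self {n m : Type*} [Fintype n] [DecidableEq n]
    (W : Matrix n m ℂ) (p : n → ℝ) (j : m) :
    (Wᴴ * diagonal (fun i => (p i : ℂ)) * W) j j = ↑(∑ i, p i * Complex.normSq (W i j)) := by
  rw [mul_apply]
  simp only [mul_diagonal, conjTranspose_apply, Complex.ofReal_sum, Complex.ofReal_mul,
    Complex.normSq_eq_conj_mul_self]
  exact Finset.sum_congr rfl fun i _ => by rw [Complex.star_def]; ring

lemma IsHermitian.conjTranspose_eigenvectorUnitary_mul_mul {n : Type*} [Fintype n]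
    [DecidableEq n] {A : Matrix n n ℂ} (hA : A.IsHermitian) :
    (hA.eigenvectorUnitary : Matrix n n ℂ)ᴴ * A * (hA.eigenvectorUnitary : Matrix n n ℂ)
      = diagonal (fun i => (hA.eigenvalues i : ℂ)) := by
  have h := hA.conjStarAlgAut_star_eigenvectorUnitary
  rwa [Unitary.conjStarAlgAut_star_apply] at h

lemma IsHermitian.kronecker_eq_conj_diagonal {m n : Type*} [Fintype m] [DecidableEq m]
    [Fintype n] [DecidableEq n] {A : Matrix m m ℂ} {B : Matrix n n ℂ} (hA : A.IsHermitian)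
    (hB : B.IsHermitian) :
    A ⊗ₖ B = ((hA.eigenvectorUnitary : Matrix m m ℂ) ⊗ₖ (hB.eigenvectorUnitary : Matrix n n ℂ))
      * diagonal (fun k => ((hA.eigenvalues k.1 * hB.eigenvalues k.2 : ℝ) : ℂ))
      * ((hA.eigenvectorUnitary : Matrix m m ℂ) ⊗ₖ (hB.eigenvectorUnitary : Matrix n n ℂ))ᴴ := by
  have hA' : A = (hA.eigenvectorUnitary : Matrix m m ℂ)
      * diagonal (fun i => (hA.eigenvalues i : ℂ)) * (hA.eigenvectorUnitary : Matrix m m ℂ)ᴴ :=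
    hA.spectral_theorem
  have hB' : B = (hB.eigenvectorUnitary : Matrix n n ℂ)
      * diagonal (fun i => (hB.eigenvalues i : ℂ)) * (hB.eigenvectorUnitary : Matrix n n ℂ)ᴴ :=
    hB.spectral_theorem
  conv_lhs => rw [hA', hB', mul_kronecker_mul, mul_kronecker_mul, diagonal_kronecker_diagonal,
    ← conjTranspose_kronecker]
  push_cast
  rfl

/-- Equality case of Klein's inequality `Tr ρ log ρ ≥ Tr ρ log σ` for `σ = V diag(q) V†`.
Since `log 0 = 0`, the inclusion `supp ρ ⊆ supp σ` has to be assumed explicitly, as `hsupp`. -/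
theorem PosSemidef.eq_of_sum_mul_log_eq {n : Type*} [Fintype n] [DecidableEq n]
    {ρ : Matrix n n ℂ} (hρ : ρ.PosSemidef) {V : Matrix n n ℂ} (hV : V ∈ unitaryGroup n ℂ)
    {q : n → ℝ} (hq : ∀ m, 0 ≤ q m) (hsum : ∑ i, hρ.1.eigenvalues i = ∑ m, q m)
    (hsupp : ∀ m, q m = 0 → (Vᴴ * ρ * V) m m = 0)
    (hent : ∑ i, hρ.1.eigenvalues i * log (hρ.1.eigenvalues i) =
      ∑ m, ((Vᴴ * ρ * V) m m).re * log (q m)) :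
    ρ = V * diagonal (fun m => (q m : ℂ)) * Vᴴ := by
  set p := hρ.1.eigenvalues
  set U := (hρ.1.eigenvectorUnitary : Matrix n n ℂ)
  have hU : U ∈ unitaryGroup n ℂ := hρ.1.eigenvectorUnitary.2
  have hρU : ρ = U * diagonal (fun i => (p i : ℂ)) * Uᴴ := hρ.1.spectral_theorem
  set W := Uᴴ * V
  have hW : W ∈ unitaryGroup n ℂ := mul_mem (Unitary.star_mem hU) hV
  have hconj : Vᴴ * ρ * V = Wᴴ * diagonal (fun i => (p i : ℂ)) * W := by
    rw [hρU]
    simp only [W, conjTranspose_mul, conjTranspose_conjTranspose, Matrix.mul_assoc]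
  simp only [hconj, conjTranspose_mul_diagonal_mul_apply_self, Complex.ofReal_re,
    Complex.ofReal_eq_zero] at hsupp hent
  have hpW : ∀ i m, W i m ≠ 0 → p i = q m := by
    intro i m him
    refine eq_of_sum_mul_log_eq_of_mem_doublyStochastic (normSq_mem_doublyStochastic hW)
      hρ.eigenvalues_nonneg hq hsum (fun i m him hqm => ?_) hent (by simpa using him)
    have hterm := (Finset.sum_eq_zero_iff_of_nonneg fun j _ =>
      mul_nonneg (hρ.eigenvalues_nonneg j) (Complex.normSq_nonneg (W j m))).1 (hsupp m hqm) i
      (Finset.mem_univ _)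
    exact (mul_eq_zero.1 hterm).resolve_right (by simpa using him)
  have hcomm : diagonal (fun i => (p i : ℂ)) * W = W * diagonal (fun m => (q m : ℂ)) := by
    ext i m
    rw [diagonal_mul, mul_diagonal]
    by_cases him : W i m = 0
    · simp [him]
    · rw [hpW i m him, mul_comm]
  have hUW : U * W = V := by
    rw [← Matrix.mul_assoc, ← star_eq_conjTranspose, mem_unitaryGroup_iff.1 hU, Matrix.one_mul]
  have hWV : W * Vᴴ = Uᴴ := by
    rw [Matrix.mul_assoc, ← star_eq_conjTranspose V, mem_unitaryGroup_iff.1 hV, Matrix.mul_one]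
  calc ρ = U * (diagonal (fun i => (p i : ℂ)) * W) * Vᴴ := by
        rw [hρU, ← hWV]; simp only [Matrix.mul_assoc]
    _ = V * diagonal (fun m => (q m : ℂ)) * Vᴴ := by rw [hcomm, ← hUW]; simp only [Matrix.mul_assoc]

lemma exists_eq_mulVec_of_mul_conjTranspose_mulVec_eq_smul {m n : Type*} [Fintype m]
    [Fintype n] {M : Matrix m n ℂ} {u : m → ℂ} {μ : ℂ} (hμ : μ ≠ 0)
    (hu : (M * Mᴴ) *ᵥ u = μ • u) : ∃ η, u = M *ᵥ η :=
  ⟨μ⁻¹ • Mᴴ *ᵥ u, by rw [mulVec_smul, mulVec_mulVec, hu, smul_smul, inv_mul_cancel₀ hμ, one_smul]⟩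

lemma IsHermitian.star_dotProduct_eq_zero_of_mulVec_eq_smul {n : Type*} [Fintype n]
    {A : Matrix n n ℂ} (hA : A.IsHermitian) {u v : n → ℂ} {μ ν : ℝ} (hμν : μ ≠ ν)
    (hu : A *ᵥ u = (μ : ℂ) • u) (hv : A *ᵥ v = (ν : ℂ) • v) : star v ⬝ᵥ u = 0 := by
  have h : (μ : ℂ) * (star v ⬝ᵥ u) = ν * (star v ⬝ᵥ u) :=
    calc (μ : ℂ) * (star v ⬝ᵥ u) = star v ⬝ᵥ (A *ᵥ u) := by rw [hu, dotProduct_smul, smul_eq_mul]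
      _ = star (A *ᵥ v) ⬝ᵥ u := by rw [dotProduct_mulVec, star_mulVec, hA.eq]
      _ = ν * (star v ⬝ᵥ u) := by
        rw [hv, star_smul, Complex.star_def, Complex.conj_ofReal, smul_dotProduct, smul_eq_mul]
  rcases mul_eq_mul_right_iff.1 h with h | h
  · exact absurd (Complex.ofReal_injective h) hμν
  · exact h

section PartialTrace

variable {b e : Type*}

def traceRight [Fintype e] (ρ : Matrix (b × e) (b × e) ℂ) : Matrix b b ℂ :=
  of fun y y' => ∑ w, ρ (y, w) (y', w)

def traceLeft [Fintype b] (ρ : Matrix (b × e) (b × e) ℂ) : Matrix e e ℂ :=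
  of fun w w' => ∑ y, ρ (y, w) (y, w')

lemma traceRight_eq_sum_submatrix [Fintype e] (ρ : Matrix (b × e) (b × e) ℂ) :
    traceRight ρ = ∑ w, ρ.submatrix (·, w) (·, w) := by
  ext y y'
  simp [traceRight, Matrix.sum_apply]

lemma traceLeft_eq_sum_submatrix [Fintype b] (ρ : Matrix (b × e) (b × e) ℂ) :
    traceLeft ρ = ∑ y, ρ.submatrix (y, ·) (y, ·) := by
  ext w w'
  simp [traceLeft, Matrix.sum_apply]

lemma PosSemidef.traceRight [Fintype e] {ρ : Matrix (b × e) (b × e) ℂ} (hρ : ρ.PosSemidef) :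
    (traceRight ρ).PosSemidef := by
  rw [traceRight_eq_sum_submatrix]
  exact posSemidef_sum _ fun w _ => hρ.submatrix _

lemma PosSemidef.traceLeft [Fintype b] {ρ : Matrix (b × e) (b × e) ℂ} (hρ : ρ.PosSemidef) :
    (traceLeft ρ).PosSemidef := by
  rw [traceLeft_eq_sum_submatrix]
  exact posSemidef_sum _ fun y _ => hρ.submatrix _

lemma trace_traceRight [Fintype b] [Fintype e] (ρ : Matrix (b × e) (b × e) ℂ) :
    (traceRight ρ).trace = ρ.trace := by
  simp [trace, traceRight, Fintype.sum_prod_type]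

lemma trace_traceLeft [Fintype b] [Fintype e] (ρ : Matrix (b × e) (b × e) ℂ) :
    (traceLeft ρ).trace = ρ.trace := by
  simp [trace, traceLeft, Fintype.sum_prod_type, Finset.sum_comm (γ := b)]

lemma traceRight_conj_kronecker [Fintype b] [Fintype e] {b' e' : Type*} [Fintype b'] [Fintype e']
    [DecidableEq e]
    (ρ : Matrix (b × e) (b × e) ℂ) (X : Matrix b b' ℂ) {Y : Matrix e e' ℂ} (hY : Y * Yᴴ = 1) :
    traceRight ((X ⊗ₖ Y)ᴴ * ρ * (X ⊗ₖ Y)) = Xᴴ * traceRight ρ * X := by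
  have hYY : ∀ w₁ w₂, ∑ w, Y w₂ w * star (Y w₁ w) = if w₂ = w₁ then 1 else 0 := fun w₁ w₂ => by
    simpa [mul_apply, one_apply] using congr_fun₂ hY w₂ w₁
  ext y y'
  simp only [traceRight, of_apply, mul_apply, Finset.sum_mul, conjTranspose_apply,
    kroneckerMap_apply, Finset.mul_sum]
  calc _ = ∑ j : b × e, ∑ i : b × e,
        star (X i.1 y) * ρ i j * X j.1 y' * ∑ w, Y j.2 w * star (Y i.2 w) := by
        rw [Finset.sum_comm]
        refine Finset.sum_congr rfl fun j _ => ?_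
        rw [Finset.sum_comm]
        refine Finset.sum_congr rfl fun i _ => ?_
        rw [Finset.mul_sum]
        exact Finset.sum_congr rfl fun w _ => by rw [star_mul']; ring
    _ = _ := by
        simp only [hYY, mul_ite, mul_one, mul_zero, Fintype.sum_prod_type, Finset.sum_ite_eq,
          Finset.mem_univ, if_true]
        exact Finset.sum_congr rfl fun x _ => Finset.sum_comm

lemma traceLeft_conj_kronecker [Fintype b] [Fintype e] {b' e' : Type*} [Fintype b'] [Fintype e']
    [DecidableEq b]
    (ρ : Matrix (b × e) (b × e) ℂ) {X : Matrix b b' ℂ} (Y : Matrix e e' ℂ) (hX : X * Xᴴ = 1) :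
    traceLeft ((X ⊗ₖ Y)ᴴ * ρ * (X ⊗ₖ Y)) = Yᴴ * traceLeft ρ * Y := by
  have hXX : ∀ y₁ y₂, ∑ y, X y₂ y * star (X y₁ y) = if y₂ = y₁ then 1 else 0 := fun y₁ y₂ => by
    simpa [mul_apply, one_apply] using congr_fun₂ hX y₂ y₁
  ext w w'
  simp only [traceLeft, of_apply, mul_apply, Finset.sum_mul, conjTranspose_apply,
    kroneckerMap_apply, Finset.mul_sum]
  calc _ = ∑ j : b × e, ∑ i : b × e,
        star (Y i.2 w) * ρ i j * Y j.2 w' * ∑ y, X j.1 y * star (X i.1 y) := by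
        rw [Finset.sum_comm]
        refine Finset.sum_congr rfl fun j _ => ?_
        rw [Finset.sum_comm]
        refine Finset.sum_congr rfl fun i _ => ?_
        rw [Finset.mul_sum]
        exact Finset.sum_congr rfl fun y _ => by rw [star_mul']; ring
    _ = _ := by
        simp only [hXX, mul_ite, mul_one, mul_zero, Fintype.sum_prod_type, Finset.sum_ite_irrel,
          Finset.sum_const_zero, Finset.sum_ite_eq, Finset.mem_univ, if_true]
        rw [Finset.sum_comm]
        exact Finset.sum_congr rfl fun _ _ => Finset.sum_comm

lemma sum_re_apply_eq_of_traceRight_eq_diagonal [Fintype e] [DecidableEq b]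
    {D : Matrix (b × e) (b × e) ℂ} {p : b → ℝ} (h : traceRight D = diagonal (fun j => (p j : ℂ)))
    (j : b) :
    ∑ k, (D (j, k) (j, k)).re = p j := by
  simpa [traceRight] using congrArg Complex.re (congr_fun₂ h j j)

lemma sum_re_apply_eq_of_traceLeft_eq_diagonal [Fintype b] [DecidableEq e]
    {D : Matrix (b × e) (b × e) ℂ} {p : e → ℝ} (h : traceLeft D = diagonal (fun k => (p k : ℂ)))
    (k : e) :
    ∑ j, (D (j, k) (j, k)).re = p k := by
  simpa [traceLeft] using congrArg Complex.re (congr_fun₂ h k k)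

end PartialTrace

end Matrix

lemma vN_eq_neg_sum_mul_log {n : Type*} [Fintype n] [DecidableEq n] {ρ : Matrix n n ℂ}
    (hρ : ρ.IsHermitian) : vN ρ = -∑ i, hρ.eigenvalues i * log (hρ.eigenvalues i) := by
  simp [vN, dif_pos hρ, Real.negMulLog, Finset.sum_neg_distrib]

lemma IsDensity.sum_eigenvalues {n : Type*} [Fintype n] [DecidableEq n] {ρ : Matrix n n ℂ}
    (hρ : IsDensity ρ) : ∑ i, hρ.1.isHermitian.eigenvalues i = 1 := by
  have h := hρ.1.isHermitian.trace_eq_sum_eigenvalues.symm.trans hρ.2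
  simpa using congrArg Complex.re h

section Coupling

variable {b e : Type*} [Fintype b] [Fintype e] {t : b × e → ℝ} {pB : b → ℝ} {pE : e → ℝ}

lemma eq_zero_of_marginal_mul_eq_zero (ht : ∀ m, 0 ≤ t m) (hB : ∀ j, ∑ k, t (j, k) = pB j)
    (hE : ∀ k, ∑ j, t (j, k) = pE k) {m : b × e} (hm : pB m.1 * pE m.2 = 0) : t m = 0 := by
  obtain ⟨j, k⟩ := m
  rcases mul_eq_zero.1 hm with h | h
  · rw [← hB j] at h
    exact (Finset.sum_eq_zero_iff_of_nonneg fun k _ => ht (j, k)).1 h k (Finset.mem_univ _)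
  · rw [← hE k] at h
    exact (Finset.sum_eq_zero_iff_of_nonneg fun j _ => ht (j, k)).1 h j (Finset.mem_univ _)

lemma sum_mul_log_mul_eq_of_marginals (ht : ∀ m, 0 ≤ t m) (hB : ∀ j, ∑ k, t (j, k) = pB j)
    (hE : ∀ k, ∑ j, t (j, k) = pE k) :
    ∑ m, t m * log (pB m.1 * pE m.2) = ∑ j, pB j * log (pB j) + ∑ k, pE k * log (pE k) := by
  have hsplit : ∀ m, t m * log (pB m.1 * pE m.2) = t m * log (pB m.1) + t m * log (pE m.2) := by
    intro m
    by_cases hm : pB m.1 * pE m.2 = 0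
    · simp [eq_zero_of_marginal_mul_eq_zero ht hB hE hm]
    · rw [log_mul (left_ne_zero_of_mul hm) (right_ne_zero_of_mul hm), mul_add]
  simp only [hsplit, Finset.sum_add_distrib, Fintype.sum_prod_type, ← Finset.sum_mul, hB]
  rw [Finset.sum_comm (f := fun j k => t (j, k) * log (pE k))]
  simp only [← Finset.sum_mul, hE]

end Coupling

section Subadditivity

variable {b e : Type*} [Fintype b] [DecidableEq b] [Fintype e] [DecidableEq e]

lemma IsDensity.traceRight {ρ : Matrix (b × e) (b × e) ℂ} (hρ : IsDensity ρ) :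
    IsDensity (traceRight ρ) :=
  ⟨hρ.1.traceRight, (trace_traceRight ρ).trans hρ.2⟩

lemma IsDensity.traceLeft {ρ : Matrix (b × e) (b × e) ℂ} (hρ : IsDensity ρ) :
    IsDensity (traceLeft ρ) :=
  ⟨hρ.1.traceLeft, (trace_traceLeft ρ).trans hρ.2⟩

theorem eq_kronecker_of_vN_add_vN_eq {ρ : Matrix (b × e) (b × e) ℂ} (hρ : IsDensity ρ)
    (h : vN (traceRight ρ) + vN (traceLeft ρ) = vN ρ) : ρ = traceRight ρ ⊗ₖ traceLeft ρ := by
  have hB := hρ.traceRight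
  have hE := hρ.traceLeft
  set pB := hB.1.isHermitian.eigenvalues
  set pE := hE.1.isHermitian.eigenvalues
  set UB := (hB.1.isHermitian.eigenvectorUnitary : Matrix b b ℂ)
  set UE := (hE.1.isHermitian.eigenvectorUnitary : Matrix e e ℂ)
  set D := (UB ⊗ₖ UE)ᴴ * ρ * (UB ⊗ₖ UE)
  have hD : D.PosSemidef := hρ.1.conjTranspose_mul_mul_same _
  set t : b × e → ℝ := fun m => (D m m).re
  have hDt : ∀ m, D m m = t m := fun m =>
    Complex.ext rfl (Complex.nonneg_iff.1 hD.diag_nonneg).2.symm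
  have ht : ∀ m, 0 ≤ t m := fun m => (Complex.nonneg_iff.1 hD.diag_nonneg).1
  have htB : ∀ j, ∑ k, t (j, k) = pB j := sum_re_apply_eq_of_traceRight_eq_diagonal <| by
    rw [traceRight_conj_kronecker ρ UB
      (mem_unitaryGroup_iff.1 hE.1.isHermitian.eigenvectorUnitary.2),
      hB.1.isHermitian.conjTranspose_eigenvectorUnitary_mul_mul]
  have htE : ∀ k, ∑ j, t (j, k) = pE k := sum_re_apply_eq_of_traceLeft_eq_diagonal <| by
    rw [traceLeft_conj_kronecker ρ UE
      (mem_unitaryGroup_iff.1 hB.1.isHermitian.eigenvectorUnitary.2),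
      hE.1.isHermitian.conjTranspose_eigenvectorUnitary_mul_mul]
  rw [hB.1.isHermitian.kronecker_eq_conj_diagonal hE.1.isHermitian]
  refine hρ.1.eq_of_sum_mul_log_eq (kronecker_mem_unitaryGroup
    hB.1.isHermitian.eigenvectorUnitary.2 hE.1.isHermitian.eigenvectorUnitary.2)
    (fun m => mul_nonneg (hB.1.eigenvalues_nonneg _) (hE.1.eigenvalues_nonneg _)) ?_
    (fun m hm => (hDt m).trans
      (by rw [eq_zero_of_marginal_mul_eq_zero ht htB htE hm, Complex.ofReal_zero]))
    ?_
  · rw [hρ.sum_eigenvalues, Fintype.sum_prod_type]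
    simp only [← Finset.mul_sum, hE.sum_eigenvalues, mul_one, hB.sum_eigenvalues]
  · rw [sum_mul_log_mul_eq_of_marginals ht htB htE]
    rw [vN_eq_neg_sum_mul_log hB.1.isHermitian, vN_eq_neg_sum_mul_log hE.1.isHermitian,
      vN_eq_neg_sum_mul_log hρ.1.isHermitian] at h
    linarith

end Subadditivity

section FourParty

variable {a b c e : Type*}

lemma redBE_eq_sum_submatrix [Fintype a] [Fintype c]
    (ρ : Matrix (a × b × c × e) (a × b × c × e) ℂ) :
    redBE ρ = ∑ x, ∑ z, ρ.submatrix (fun s => (x, s.1, z, s.2)) (fun s => (x, s.1, z, s.2)) := by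
  ext s t
  simp [redBE, Matrix.sum_apply]

lemma Matrix.PosSemidef.redBE [Fintype a] [Fintype c]
    {ρ : Matrix (a × b × c × e) (a × b × c × e) ℂ} (hρ : ρ.PosSemidef) :
    (redBE ρ).PosSemidef := by
  rw [redBE_eq_sum_submatrix]
  exact posSemidef_sum _ fun x _ => posSemidef_sum _ fun z _ => hρ.submatrix _

lemma trace_redBE [Fintype a] [Fintype b] [Fintype c] [Fintype e]
    (ρ : Matrix (a × b × c × e) (a × b × c × e) ℂ) : (redBE ρ).trace = ρ.trace := by
  simp only [trace, redBE, diag_apply, of_apply, Fintype.sum_prod_type]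
  exact (Finset.sum_congr rfl fun _ _ => Finset.sum_comm.trans
    (Finset.sum_congr rfl fun _ _ => Finset.sum_comm)).trans Finset.sum_comm

lemma traceRight_redBE [Fintype a] [Fintype c] [Fintype e]
    (ρ : Matrix (a × b × c × e) (a × b × c × e) ℂ) : traceRight (redBE ρ) = rB (redABC ρ) := by
  ext y y'
  simp only [Matrix.traceRight, redBE, rB, redABC, of_apply]
  exact Finset.sum_comm.trans (Finset.sum_congr rfl fun _ _ => Finset.sum_comm)

lemma traceLeft_redBE [Fintype a] [Fintype b] [Fintype c]
    (ρ : Matrix (a × b × c × e) (a × b × c × e) ℂ) : traceLeft (redBE ρ) = redE ρ := by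
  ext w w'
  simp only [Matrix.traceLeft, redBE, redE, of_apply]
  exact Finset.sum_comm

lemma redBE_eq_kronecker [Fintype a] [Fintype b] [Fintype c] [Fintype e] [DecidableEq b]
    [DecidableEq e] {ρ : Matrix (a × b × c × e) (a × b × c × e) ℂ} (hρ : ρ.PosSemidef)
    (htr : ρ.trace = 1) (hBE : vN (rB (redABC ρ)) + vN (redE ρ) = vN (redBE ρ)) :
    redBE ρ = rB (redABC ρ) ⊗ₖ redE ρ := by
  rw [← traceRight_redBE, ← traceLeft_redBE] at hBE ⊢
  exact eq_kronecker_of_vN_add_vN_eq ⟨hρ.redBE, (trace_redBE ρ).trans htr⟩ hBE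

lemma trace_pureDM {n : Type*} [Fintype n] (ψ : n → ℂ) :
    (pureDM ψ).trace = ∑ i, (Complex.normSq (ψ i) : ℂ) := by
  simp [pureDM, trace, vecMulVec_apply, Complex.mul_conj]

def stateMatrix (φ : a × b × c × e → ℂ) : Matrix (a × b × c) e ℂ :=
  of fun s w => φ (s.1, s.2.1, s.2.2, w)

lemma redABC_pureDM [Fintype e] (φ : a × b × c × e → ℂ) :
    redABC (pureDM φ) = stateMatrix φ * (stateMatrix φ)ᴴ := by
  ext s t
  simp [redABC, pureDM, stateMatrix, mul_apply, vecMulVec_apply]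

lemma rB_vecMulVec_stateMatrix_mulVec_apply [Fintype a] [Fintype c] [Fintype e]
    (φ : a × b × c × e → ℂ) (η ζ : e → ℂ) (y y' : b) :
    rB (vecMulVec (stateMatrix φ *ᵥ η) (star (stateMatrix φ *ᵥ ζ))) y y'
      = ∑ w', ∑ w, η w * star (ζ w') * redBE (pureDM φ) (y, w) (y', w') := by
  simp only [rB, redBE, pureDM, stateMatrix, of_apply, vecMulVec_apply, mulVec, dotProduct,
    Pi.star_apply, star_sum, star_mul', Finset.sum_mul, Finset.mul_sum,
    ← Fintype.sum_prod_type' (α₁ := a) (α₂ := c)]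
  rw [Finset.sum_comm]
  refine Finset.sum_congr rfl fun w' _ => ?_
  rw [Finset.sum_comm]
  exact Finset.sum_congr rfl fun w _ => Finset.sum_congr rfl fun p _ => by ring

lemma star_stateMatrix_mulVec_dotProduct [Fintype a] [Fintype b] [Fintype c] [Fintype e]
    (φ : a × b × c × e → ℂ) (η ζ : e → ℂ) :
    star (stateMatrix φ *ᵥ ζ) ⬝ᵥ (stateMatrix φ *ᵥ η)
      = ∑ w', ∑ w, η w * star (ζ w') * redE (pureDM φ) w w' := by
  simp only [redE, pureDM, stateMatrix, of_apply, vecMulVec_apply, mulVec, dotProduct,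
    Pi.star_apply, star_sum, star_mul', Finset.sum_mul, Finset.mul_sum,
    ← Fintype.sum_prod_type' (α₁ := b) (α₂ := c), ← Fintype.sum_prod_type' (α₁ := a) (α₂ := b × c)]
  rw [Finset.sum_congr rfl fun s _ => Finset.sum_comm, Finset.sum_comm]
  refine Finset.sum_congr rfl fun w' _ => ?_
  rw [Finset.sum_comm]
  exact Finset.sum_congr rfl fun w _ => Finset.sum_congr rfl fun s _ => by ring

lemma rB_vecMulVec_stateMatrix_mulVec [Fintype a] [Fintype b] [Fintype c] [Fintype e]
    {φ : a × b × c × e → ℂ}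
    (hprod : redBE (pureDM φ) = rB (redABC (pureDM φ)) ⊗ₖ redE (pureDM φ)) (η ζ : e → ℂ) :
    rB (vecMulVec (stateMatrix φ *ᵥ η) (star (stateMatrix φ *ᵥ ζ)))
      = (star (stateMatrix φ *ᵥ ζ) ⬝ᵥ (stateMatrix φ *ᵥ η)) • rB (redABC (pureDM φ)) := by
  ext y y'
  rw [rB_vecMulVec_stateMatrix_mulVec_apply, hprod, star_stateMatrix_mulVec_dotProduct,
    Matrix.smul_apply, smul_eq_mul, Finset.sum_mul]
  refine Finset.sum_congr rfl fun w' _ => ?_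
  rw [Finset.sum_mul]
  exact Finset.sum_congr rfl fun w _ => by rw [kroneckerMap_apply]; ring

lemma rAC_pureDM_mul_rAC_pureDM_eq_zero [Fintype a] [Fintype b] [Fintype c]
    {u v : a × b × c → ℂ} (h : rB (vecMulVec v (star u)) = 0) :
    rAC (pureDM u) * rAC (pureDM v) = 0 := by
  let K : (a × b × c → ℂ) → Matrix (a × c) b ℂ := fun ψ => of fun m y => ψ (m.1, y, m.2)
  have hrAC : ∀ ψ, rAC (pureDM ψ) = K ψ * (K ψ)ᴴ := fun ψ => by
    ext
    simp [rAC, pureDM, K, mul_apply, vecMulVec_apply]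
  have hK : (K u)ᴴ * K v = (rB (vecMulVec v (star u)))ᵀ := by
    ext
    simp [rB, K, mul_apply, vecMulVec_apply, Fintype.sum_prod_type, mul_comm]
  rw [hrAC, hrAC, Matrix.mul_assoc, ← Matrix.mul_assoc (K u)ᴴ, hK, h, transpose_zero,
    Matrix.zero_mul, Matrix.mul_zero]

end FourParty

theorem eigenvectors_distinguishable_on_AC_general
    {a b c e : Type*} [Fintype a] [Fintype b] [Fintype c] [Fintype e]
    [DecidableEq b] [DecidableEq e]
    (φ : a × b × c × e → ℂ) (hφ : ∑ q, Complex.normSq (φ q) = 1)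
    (hBE : vN (rB (redABC (pureDM φ))) + vN (redE (pureDM φ)) = vN (redBE (pureDM φ)))
    (u v : a × b × c → ℂ) (μ ν : ℝ) (hμ : μ ≠ 0) (hν : ν ≠ 0) (hμν : μ ≠ ν)
    (hu : (redABC (pureDM φ)) *ᵥ u = (μ : ℂ) • u)
    (hv : (redABC (pureDM φ)) *ᵥ v = (ν : ℂ) • v) :
    rAC (pureDM u) * rAC (pureDM v) = 0 := by
  have hprod := redBE_eq_kronecker (ρ := pureDM φ) (posSemidef_vecMulVec_self_star φ)
    (by rw [trace_pureDM]; exact_mod_cast hφ) hBE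
  rw [redABC_pureDM] at hu hv
  have horth : star u ⬝ᵥ v = 0 := (isHermitian_mul_conjTranspose_self _)
    |>.star_dotProduct_eq_zero_of_mulVec_eq_smul (Ne.symm hμν) hv hu
  obtain ⟨η, rfl⟩ := exists_eq_mulVec_of_mul_conjTranspose_mulVec_eq_smul
    (Complex.ofReal_ne_zero.2 hμ) hu
  obtain ⟨ζ, rfl⟩ := exists_eq_mulVec_of_mul_conjTranspose_mulVec_eq_smul
    (Complex.ofReal_ne_zero.2 hν) hv
  refine rAC_pureDM_mul_rAC_pureDM_eq_zero ?_
  rw [rB_vecMulVec_stateMatrix_mulVec hprod, horth, zero_smul]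

/-- Let `|φ⟩` be a pure state on `A ⊗ B ⊗ C ⊗ E` with
`I(A:E) = I(B:E) = I(C:E) = 0`.  Then for any two eigenvectors of
`σ_{ABC} = Tr_E |φ⟩⟨φ|` with distinct (nonzero) eigenvalues, the reduced density
matrices `Tr_B[|φ_i⟩⟨φ_i|]` on `A ⊗ C` are supported on orthogonal subspaces,
i.e. their product vanishes. -/
theorem eigenvectors_distinguishable_on_AC
    {a b c e : Type*} [Fintype a] [Fintype b] [Fintype c] [Fintype e]
    [DecidableEq a] [DecidableEq b] [DecidableEq c] [DecidableEq e]
    (φ : a × b × c × e → ℂ) (hφ : ∑ q, Complex.normSq (φ q) = 1)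
    (hAE : vN (rA (redABC (pureDM φ))) + vN (redE (pureDM φ)) = vN (redAE (pureDM φ)))
    (hBE : vN (rB (redABC (pureDM φ))) + vN (redE (pureDM φ)) = vN (redBE (pureDM φ)))
    (hCE : vN (rC (redABC (pureDM φ))) + vN (redE (pureDM φ)) = vN (redCE (pureDM φ)))
    (u v : a × b × c → ℂ) (μ ν : ℝ) (hμ : μ ≠ 0) (hν : ν ≠ 0) (hμν : μ ≠ ν)
    (hu : (redABC (pureDM φ)) *ᵥ u = (μ : ℂ) • u)
    (hv : (redABC (pureDM φ)) *ᵥ v = (ν : ℂ) • v) :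
    rAC (pureDM u) * rAC (pureDM v) = 0 :=
  eigenvectors_distinguishable_on_AC_general φ hφ hBE u v μ ν hμ hν hμν hu hv
end

section
/- For positive semidefinite matrices A ≥ B > 0 (both invertible), log A - log B = ∫_0^∞ [(B + tI)^{-1} - (A + tI)^{-1}] dt, and in particular the integrand is positive semidefinite for each t ≥ 0, so log A ≥ log B. -/
open scoped ComplexOrder
open Matrix

/-- The logarithm of a Hermitian matrix, defined through the spectral theorem
(junk value `0` on non-Hermitian input). -/
noncomputable def matLog {n : Type*} [Fintype n] [DecidableEq n]
    (A : Matrix n n ℂ) : Matrix n n ℂ :=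
  if h : A.IsHermitian then
    (h.eigenvectorUnitary : Matrix n n ℂ) *
      Matrix.diagonal (fun i => (Real.log (h.eigenvalues i) : ℂ)) *
      (star (h.eigenvectorUnitary : Matrix n n ℂ))
  else 0

/-!
In an eigenbasis of a positive definite matrix, the integral representation is the scalar
identity `∫₀^∞ ((1 + t)⁻¹ - (x + t)⁻¹) dt = log x` for `x > 0` in each eigenvalue; the
antiderivative `log (1 + t) - log (x + t)` vanishes at infinity. The term `(1 + t)⁻¹` cancels
in `(B + t)⁻¹ - (A + t)⁻¹` but makes the integrals for `log A` and `log B` converge separately.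
Positivity of the integrand and of `log A - log B` are operator antitonicity of the inverse and
operator monotonicity of the logarithm in a C⋆-algebra, here matrices with the L² operator norm.
-/

open MeasureTheory Set Filter Real
open scoped MatrixOrder Topology

noncomputable def logIntegrand (t x : ℝ) : ℝ := (1 + t)⁻¹ - (x + t)⁻¹

section Scalar

variable {x : ℝ}

lemma hasDerivAt_log_one_add_sub_log_add (hx : 0 < x) {t : ℝ} (ht : 0 ≤ t) :
    HasDerivAt (fun s => log (1 + s) - log (x + s)) (logIntegrand t x) t := by
  have h1 := ((hasDerivAt_id t).const_add 1).log (by positivity)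
  have h2 := ((hasDerivAt_id t).const_add x).log (by positivity)
  simpa [logIntegrand] using h1.fun_sub h2

lemma tendsto_log_one_add_sub_log_add (x : ℝ) :
    Tendsto (fun s => log (1 + s) - log (x + s)) atTop (𝓝 0) := by
  simpa [add_comm] using (tendsto_log_comp_add_sub_log 1).sub (tendsto_log_comp_add_sub_log x)

lemma integrableOn_logIntegrand (hx : 0 < x) :
    IntegrableOn (fun t => logIntegrand t x) (Ioi 0) := by
  have hderiv := fun t (ht : t ∈ Ici (0 : ℝ)) => hasDerivAt_log_one_add_sub_log_add hx ht
  rcases le_total 1 x with h | h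
  · refine integrableOn_Ioi_deriv_of_nonneg' hderiv (fun t ht => ?_)
      (tendsto_log_one_add_sub_log_add x)
    exact sub_nonneg.2 (inv_anti₀ (by linarith [mem_Ioi.1 ht]) (by linarith))
  · refine integrableOn_Ioi_deriv_of_nonpos' hderiv (fun t ht => ?_)
      (tendsto_log_one_add_sub_log_add x)
    exact sub_nonpos.2 (inv_anti₀ (by linarith [mem_Ioi.1 ht]) (by linarith))

lemma integral_logIntegrand (hx : 0 < x) : ∫ t in Ioi 0, logIntegrand t x = log x := by
  rw [integral_Ioi_of_hasDerivAt_of_tendsto'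
    (fun t ht => hasDerivAt_log_one_add_sub_log_add hx ht)
    (integrableOn_logIntegrand hx) (tendsto_log_one_add_sub_log_add x)]
  simp

end Scalar

namespace Matrix

lemma PosDef.add_smul_one {n : Type*} [DecidableEq n] {M : Matrix n n ℂ} {t : ℝ} (hM : M.PosDef)
    (ht : 0 ≤ t) : (M + (t : ℂ) • 1).PosDef :=
  hM.add_posSemidef (PosSemidef.one.smul (Complex.zero_le_real.2 ht))

variable {n : Type*} [Fintype n] [DecidableEq n] {M : Matrix n n ℂ}

lemma IsHermitian.cfc_apply_eq_sum (hM : M.IsHermitian) (f : ℝ → ℝ) (i j : n) :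
    cfc f M i j = ∑ k, (f (hM.eigenvalues k) : ℂ) *
      (hM.eigenvectorBasis k i * star (hM.eigenvectorBasis k j)) := by
  rw [hM.cfc_eq, IsHermitian.cfc, Unitary.conjStarAlgAut_apply, mul_apply]
  simp [mul_diagonal, mul_comm, mul_assoc]

section Integral

variable {α : Type*} [MeasurableSpace α] {ν : Measure α} {g : α → ℝ → ℝ}

lemma IsHermitian.integrable_cfc_apply (hM : M.IsHermitian)
    (hg : ∀ x ∈ spectrum ℝ M, Integrable (fun t => g t x) ν) (i j : n) :
    Integrable (fun t => cfc (g t) M i j) ν := by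
  simp_rw [hM.cfc_apply_eq_sum]
  exact integrable_finsetSum _ fun k _ =>
    (hg _ (hM.eigenvalues_mem_spectrum_real k)).ofReal.mul_const _

lemma IsHermitian.integral_cfc_apply (hM : M.IsHermitian)
    (hg : ∀ x ∈ spectrum ℝ M, Integrable (fun t => g t x) ν) (i j : n) :
    ∫ t, cfc (g t) M i j ∂ν = cfc (fun x => ∫ t, g t x ∂ν) M i j := by
  simp_rw [hM.cfc_apply_eq_sum]
  rw [integral_finsetSum _ fun k _ =>
    (hg _ (hM.eigenvalues_mem_spectrum_real k)).ofReal.mul_const _]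
  refine Finset.sum_congr rfl fun k _ => ?_
  rw [integral_mul_const, integral_complex_ofReal]

end Integral

lemma IsHermitian.matLog_eq_cfc (hM : M.IsHermitian) : matLog M = cfc Real.log M := by
  rw [hM.cfc_eq, matLog, dif_pos hM]
  rfl

lemma PosDef.inv_add_smul_one_eq_cfc {t : ℝ} (hM : M.PosDef) (ht : 0 ≤ t) :
    (M + (t : ℂ) • 1)⁻¹ = cfc (fun x => (x + t)⁻¹) M := by
  have hspec : ∀ x ∈ spectrum ℝ M, x + t ≠ 0 := fun x hx =>
    (add_pos_of_pos_of_nonneg (hM.isStrictlyPositive.spectrum_pos hx) ht).ne'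
  have hsa : IsSelfAdjoint M := hM.isHermitian
  rw [cfc_inv (fun x => x + t) M hspec, cfc_add_const t (fun x => x) M, cfc_id' ℝ M,
    Algebra.algebraMap_eq_smul_one, nonsing_inv_eq_ringInverse]
  norm_cast

lemma PosDef.cfc_logIntegrand {t : ℝ} (hM : M.PosDef) (ht : 0 ≤ t) :
    cfc (logIntegrand t) M = algebraMap ℝ _ (1 + t)⁻¹ - (M + (t : ℂ) • 1)⁻¹ := by
  have hsa : IsSelfAdjoint M := hM.isHermitian
  rw [hM.inv_add_smul_one_eq_cfc ht, ← cfc_const (1 + t)⁻¹ M,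
    ← cfc_sub _ _ M (M.finite_real_spectrum.continuousOn _)
      (M.finite_real_spectrum.continuousOn _)]
  rfl

lemma PosDef.integrableOn_cfc_logIntegrand_apply (hM : M.PosDef) (i j : n) :
    IntegrableOn (fun t => cfc (logIntegrand t) M i j) (Ioi 0) :=
  hM.isHermitian.integrable_cfc_apply
    (fun _ hx => integrableOn_logIntegrand (hM.isStrictlyPositive.spectrum_pos hx)) i j

lemma PosDef.matLog_apply_eq_integral (hM : M.PosDef) (i j : n) :
    matLog M i j = ∫ t in Ioi 0, cfc (logIntegrand t) M i j := by
  have hspec : ∀ x ∈ spectrum ℝ M, 0 < x := fun _ hx => hM.isStrictlyPositive.spectrum_pos hx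
  rw [hM.isHermitian.integral_cfc_apply (fun _ hx => integrableOn_logIntegrand (hspec _ hx)),
    hM.isHermitian.matLog_eq_cfc, cfc_congr fun x hx => (integral_logIntegrand (hspec x hx)).symm]

open scoped Matrix.Norms.L2Operator in
lemma PosDef.posSemidef_inv_sub_inv {A B : Matrix n n ℂ} (hB : B.PosDef)
    (hAB : (A - B).PosSemidef) : (B⁻¹ - A⁻¹).PosSemidef := by
  have hA : A.PosDef := by simpa using hB.add_posSemidef hAB
  refine le_iff.1 ?_
  simpa [coe_units_inv] using
    CStarAlgebra.inv_le_inv (a := hB.isUnit.unit) (b := hA.isUnit.unit) hB.posSemidef.nonneg hAB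

open scoped Matrix.Norms.L2Operator in
lemma PosDef.posSemidef_matLog_sub_matLog {A B : Matrix n n ℂ} (hB : B.PosDef)
    (hAB : (A - B).PosSemidef) : (matLog A - matLog B).PosSemidef := by
  have hA : A.PosDef := by simpa using hB.add_posSemidef hAB
  rw [hA.isHermitian.matLog_eq_cfc, hB.isHermitian.matLog_eq_cfc]
  exact CFC.log_le_log (a := B) hAB hB.isStrictlyPositive

end Matrix

/-- For matrices `A ≥ B > 0`, one has the integral representation
`log A - log B = ∫_0^∞ [(B + tI)⁻¹ - (A + tI)⁻¹] dt` (stated entrywise); moreover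
the integrand is positive semidefinite for every `t ≥ 0`, and consequently
`log A ≥ log B` (operator monotonicity of the logarithm). -/
theorem matrix_log_integral_and_monotone
    {n : Type*} [Fintype n] [DecidableEq n]
    (A B : Matrix n n ℂ) (hB : B.PosDef) (hAB : (A - B).PosSemidef) :
    (∀ t : ℝ, 0 ≤ t →
        ((B + (t : ℂ) • 1)⁻¹ - (A + (t : ℂ) • 1)⁻¹).PosSemidef) ∧
      (∀ i j, (matLog A - matLog B) i j =
        ∫ t in Set.Ioi (0 : ℝ), ((B + (t : ℂ) • 1)⁻¹ - (A + (t : ℂ) • 1)⁻¹) i j) ∧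
      (matLog A - matLog B).PosSemidef := by
  have hA : A.PosDef := by simpa using hB.add_posSemidef hAB
  refine ⟨fun t ht => ?_, fun i j => ?_, hB.posSemidef_matLog_sub_matLog hAB⟩
  · refine (hB.add_smul_one ht).posSemidef_inv_sub_inv ?_
    rwa [add_sub_add_right_eq_sub]
  · rw [Matrix.sub_apply, hA.matLog_apply_eq_integral, hB.matLog_apply_eq_integral,
      ← integral_sub (hA.integrableOn_cfc_logIntegrand_apply i j)
        (hB.integrableOn_cfc_logIntegrand_apply i j)]
    refine setIntegral_congr_fun measurableSet_Ioi fun t ht => ?_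
    simp only [hA.cfc_logIntegrand (le_of_lt ht), hB.cfc_logIntegrand (le_of_lt ht),
      Matrix.sub_apply]
    ring
end

section
/- Let ρ_1 be a density matrix supported on a subspace V, and ρ_2 another density matrix, and let k > 0. If (ρ_1 + tI)^{-1} = (ρ_1 + k ρ_2 + tI)^{-1} when both sides are compressed to V, for all t > 0, then ρ_2 is supported on the orthogonal complement of V (i.e., P_V ρ_2 P_V = 0 and P_V ρ_2 (I - P_V) = 0, equivalently ρ_1 ρ_2 = 0). -/
/-!
The resolvent identity `A⁻¹ - B⁻¹ = A⁻¹ (B - A) B⁻¹` turns the hypothesis into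
`P (ρ₁ + t)⁻¹ ρ₂ (ρ₁ + k ρ₂ + t)⁻¹ P = 0` for all `t > 0`. Multiplying by `t²` and letting
`t → ∞` gives `P ρ₂ P = 0`, which for `ρ₂ ≥ 0` forces `ρ₂ P = 0`; the remaining claims follow
from `ρ₁ = ρ₁ P`.
-/

open scoped ComplexOrder
open Filter Topology

namespace Matrix

variable {n : Type*} [DecidableEq n]

theorem PosSemidef.add_smul_one_posDef {M : Matrix n n ℂ} (hM : M.PosSemidef) {t : ℝ}
    (ht : 0 < t) : (M + (t : ℂ) • 1).PosDef :=
  PosDef.posSemidef_add hM (PosDef.one.smul (Complex.zero_lt_real.2 ht))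

variable [Fintype n]

theorem inv_smul₀ {K : Type*} [Field K] (c : K) (A : Matrix n n K) : (c • A)⁻¹ = c⁻¹ • A⁻¹ := by
  rcases eq_or_ne c 0 with rfl | hc
  · simp
  by_cases hA : IsUnit A.det
  · exact inv_smul' A (Units.mk0 c hc) hA
  · have hcA : ¬IsUnit (c • A).det := by
      simpa [det_smul, isUnit_iff_ne_zero, hc] using hA
    rw [nonsing_inv_apply_not_isUnit _ hA, nonsing_inv_apply_not_isUnit _ hcA, smul_zero]

theorem inv_smul_add_one {K : Type*} [Field K] (M : Matrix n n K) {t : K} (ht : t ≠ 0) :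
    (t⁻¹ • M + 1)⁻¹ = t • (M + t • 1)⁻¹ := by
  have hfactor : t⁻¹ • M + 1 = t⁻¹ • (M + t • 1) := by
    rw [smul_add, smul_smul, inv_mul_cancel₀ ht, one_smul]
  rw [hfactor, inv_smul₀, inv_inv]

theorem mul_inv_mul_sub_mul_inv_mul_eq_zero {α : Type*} [CommRing α] {P A B : Matrix n n α}
    (hA : IsUnit A) (hB : IsUnit B) (h : P * A⁻¹ * P = P * B⁻¹ * P) :
    P * (A⁻¹ * (B - A) * B⁻¹) * P = 0 := by
  rw [← inv_sub_inv (iff_of_true hA hB), Matrix.mul_sub, Matrix.sub_mul, h, sub_self]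

theorem continuousAt_smul_add_one_inv (M : Matrix n n ℂ) :
    ContinuousAt (fun s : ℝ => ((s : ℂ) • M + 1)⁻¹) 0 := by
  have hinv : ContinuousAt Inv.inv ((((0 : ℝ) : ℂ) • M + 1 : Matrix n n ℂ)) := by
    refine continuousAt_matrix_inv _ ?_
    simp
  exact ContinuousAt.comp (g := Inv.inv) (f := fun s : ℝ => (s : ℂ) • M + 1) hinv (by fun_prop)

theorem PosSemidef.mul_eq_zero_of_conjTranspose_mul_mul_eq_zero {m : Type*} {ρ : Matrix n n ℂ}
    (hρ : ρ.PosSemidef) {P : Matrix n m ℂ} (h : Pᴴ * ρ * P = 0) : ρ * P = 0 := by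
  open scoped MatrixOrder Matrix.Norms.L2Operator in
  obtain ⟨B, rfl⟩ := CStarAlgebra.nonneg_iff_eq_star_mul_self.mp hρ.nonneg
  rw [star_eq_conjTranspose, conjTranspose_mul_self_mul_eq_zero, ← conjTranspose_mul_self_eq_zero]
  simpa only [star_eq_conjTranspose, conjTranspose_mul, Matrix.mul_assoc] using h

theorem mul_mul_eq_zero_of_forall_mul_resolvent_mul {P X Q M N : Matrix n n ℂ}
    (h : ∀ t : ℝ, 0 < t → P * (M + (t : ℂ) • 1)⁻¹ * X * (N + (t : ℂ) • 1)⁻¹ * Q = 0) :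
    P * X * Q = 0 := by
  set f : ℝ → Matrix n n ℂ := fun s => P * ((s : ℂ) • M + 1)⁻¹ * X * ((s : ℂ) • N + 1)⁻¹ * Q
  have hf : ContinuousAt f 0 :=
    (((continuousAt_const.mul (continuousAt_smul_add_one_inv M)).mul continuousAt_const).mul
      (continuousAt_smul_add_one_inv N)).mul continuousAt_const
  -- `f s = t² P (M + t)⁻¹ X (N + t)⁻¹ Q` for `t = 1/s`, and `f` is continuous at `s = 0`
  have hf_pos : ∀ s ∈ Set.Ioi (0 : ℝ), f s = 0 := by
    intro s hs
    have ht : ((s⁻¹ : ℝ) : ℂ) ≠ 0 := by simpa using (ne_of_gt hs)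
    have hs_eq : (s : ℂ) = ((s⁻¹ : ℝ) : ℂ)⁻¹ := by simp
    simp only [f, hs_eq, inv_smul_add_one _ ht, Matrix.mul_smul, Matrix.smul_mul,
      h s⁻¹ (inv_pos.2 hs), smul_zero]
  have hf_zero : f 0 = P * X * Q := by simp [f]
  have hlim : Tendsto f (𝓝[>] 0) (𝓝 0) :=
    tendsto_const_nhds.congr' (eventually_nhdsWithin_of_forall fun s hs => (hf_pos s hs).symm)
  rw [← hf_zero]
  exact tendsto_nhds_unique hf.continuousWithinAt.tendsto hlim

end Matrix

open Matrix

theorem compressed_resolvent_forces_orthogonal_support_general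
    {n : Type*} [Fintype n] [DecidableEq n]
    (ρ₁ ρ₂ : Matrix n n ℂ) (h₁ : ρ₁.PosSemidef ∧ ρ₁.trace = 1)
    (h₂ : ρ₂.PosSemidef ∧ ρ₂.trace = 1)
    (P : Matrix n n ℂ) (hP : P.IsHermitian)
    -- the support of ρ₁ is contained in V = range P ...
    (hsupp₁ : ρ₁ * P = ρ₁)
    (k : ℝ) (hk : 0 < k)
    (hres : ∀ t : ℝ, 0 < t →
      P * (ρ₁ + (t : ℂ) • 1)⁻¹ * P
        = P * (ρ₁ + (k : ℂ) • ρ₂ + (t : ℂ) • 1)⁻¹ * P) :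
    P * ρ₂ * P = 0 ∧ P * ρ₂ * (1 - P) = 0 ∧ ρ₁ * ρ₂ = 0 := by
  have hσ : (ρ₁ + (k : ℂ) • ρ₂).PosSemidef :=
    h₁.1.add (h₂.1.smul (Complex.zero_le_real.2 hk.le))
  have hPρP : P * ρ₂ * P = 0 := by
    refine mul_mul_eq_zero_of_forall_mul_resolvent_mul (M := ρ₁) (N := ρ₁ + (k : ℂ) • ρ₂)
      fun t ht => ?_
    have hdiff := mul_inv_mul_sub_mul_inv_mul_eq_zero (h₁.1.add_smul_one_posDef ht).isUnit
      (hσ.add_smul_one_posDef ht).isUnit (hres t ht)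
    rw [add_sub_add_right_eq_sub, add_sub_cancel_left, Matrix.mul_smul, Matrix.smul_mul,
      Matrix.mul_smul, Matrix.smul_mul, smul_eq_zero_iff_right (by exact_mod_cast hk.ne')] at hdiff
    simpa only [Matrix.mul_assoc] using hdiff
  have hρ₂P : ρ₂ * P = 0 :=
    h₂.1.mul_eq_zero_of_conjTranspose_mul_mul_eq_zero (by rwa [hP.eq])
  have hPρ₂ : P * ρ₂ = 0 := by
    rw [← hP.eq, ← h₂.1.isHermitian.eq, ← conjTranspose_mul, hρ₂P, conjTranspose_zero]
  refine ⟨hPρP, by rw [hPρ₂, Matrix.zero_mul], ?_⟩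
  rw [← hsupp₁, Matrix.mul_assoc, hPρ₂, Matrix.mul_zero]

/-- Let `ρ₁` be a density matrix whose support is exactly the range of
the orthogonal projection `P` (onto a subspace `V`), let `ρ₂` be another density
matrix and `k > 0`.  If the compressions to `V` of `(ρ₁ + tI)⁻¹` and
`(ρ₁ + k ρ₂ + tI)⁻¹` agree for all `t > 0`, then `ρ₂` is supported on the orthogonal
complement of `V`: `P ρ₂ P = 0`, `P ρ₂ (1 - P) = 0`, equivalently `ρ₁ ρ₂ = 0`. -/
theorem compressed_resolvent_forces_orthogonal_support
    {n : Type*} [Fintype n] [DecidableEq n]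
    (ρ₁ ρ₂ : Matrix n n ℂ) (h₁ : ρ₁.PosSemidef ∧ ρ₁.trace = 1)
    (h₂ : ρ₂.PosSemidef ∧ ρ₂.trace = 1)
    (P : Matrix n n ℂ) (hP : P.IsHermitian) (hP2 : P * P = P)
    -- the support of ρ₁ is contained in V = range P ...
    (hsupp₁ : ρ₁ * P = ρ₁)
    -- ... and V is contained in the support of ρ₁ (P is the support projection)
    (hsupp₂ : ∀ v : n → ℂ, ρ₁ *ᵥ v = 0 → P *ᵥ v = 0)
    (k : ℝ) (hk : 0 < k)
    (hres : ∀ t : ℝ, 0 < t →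
      P * (ρ₁ + (t : ℂ) • 1)⁻¹ * P
        = P * (ρ₁ + (k : ℂ) • ρ₂ + (t : ℂ) • 1)⁻¹ * P) :
    P * ρ₂ * P = 0 ∧ P * ρ₂ * (1 - P) = 0 ∧ ρ₁ * ρ₂ = 0 :=
  compressed_resolvent_forces_orthogonal_support_general ρ₁ ρ₂ h₁ h₂ P hP hsupp₁ k hk hres
end
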